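/- For every element w of the free group F_2 on two generators a, b, one has Pal(w) = (b a)⁻¹ R_w(b a), i.e., Pal(w) = a⁻¹ b⁻¹ R_w(b a). -/

import Mathlib

namespace PalWord

/-- The free group on two generators `a`, `b`. -/
abbrev F : Type := FreeGroup Bool

/-- The first generator `a` of the free group `F`. -/
def a : F := FreeGroup.of false

/-- The second generator `b` of the free group `F`. -/
def b : F := FreeGroup.of true

/-- The automorphism `R_a` of `F`, with `a ↦ a`, `b ↦ b a`. -/
def Ra : MulAut F :=
  MonoidHom.toMulEquiv
    (FreeGroup.lift (fun x => if x then b * a else a))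
    (FreeGroup.lift (fun x => if x then b * a⁻¹ else a))
    (by ext x; cases x <;> simp [a, b])
    (by ext x; cases x <;> simp [a, b])

/-- The automorphism `R_b` of `F`, with `a ↦ a b`, `b ↦ b`. -/
def Rb : MulAut F :=
  MonoidHom.toMulEquiv
    (FreeGroup.lift (fun x => if x then b else a * b))
    (FreeGroup.lift (fun x => if x then b else a * b⁻¹))
    (by ext x; cases x <;> simp [a, b])
    (by ext x; cases x <;> simp [a, b])

/-- The homomorphism `w ↦ R_w` from `F` to `Aut(F)`, sending `a` to `R_a` and `b` to `R_b`. -/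
def R : F →* MulAut F := FreeGroup.lift (fun x => if x then Rb else Ra)

/-- The palindromization map `Pal(w) = (a b)⁻¹ · R_w(a b)`. -/
def Pal (w : F) : F := (a * b)⁻¹ * R w (a * b)

/-!
The commutator `⁅b, a⁆ = b a b⁻¹ a⁻¹` is fixed by `R_a` and by `R_b`, hence by every `R_w`.
Since `b a = ⁅b, a⁆ · a b`, applying `R_w` gives `R_w(b a) = ⁅b, a⁆ · R_w(a b)`, and the factor
`⁅b, a⁆` is absorbed by `(b a)⁻¹ ⁅b, a⁆ = (a b)⁻¹`.
-/

open scoped commutatorElement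

theorem _root_.FreeGroup.lift_apply_eq_self {α H : Type*} [Group H] (f : α → MulAut H) {h : H}
    (hf : ∀ x, f x h = h) (w : FreeGroup α) : FreeGroup.lift f w h = h := by
  have hrange : (FreeGroup.lift f).range ≤ MulAction.stabilizer (MulAut H) h :=
    FreeGroup.range_lift_le (Set.range_subset_iff.mpr hf)
  exact hrange ⟨w, rfl⟩

theorem _root_.MulAut.inv_mul_apply_mul_swap_of_apply_commutator {G : Type*} [Group G]
    (σ : MulAut G) {x y : G} (hσ : σ ⁅y, x⁆ = ⁅y, x⁆) :
    (x * y)⁻¹ * σ (x * y) = (y * x)⁻¹ * σ (y * x) := by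
  have hyx : y * x = ⁅y, x⁆ * (x * y) := by rw [commutatorElement_def]; group
  rw [hyx, map_mul σ ⁅y, x⁆, hσ, commutatorElement_def]
  group

theorem Ra_apply_a : Ra a = a := rfl

theorem Ra_apply_b : Ra b = b * a := rfl

theorem Rb_apply_a : Rb a = a * b := rfl

theorem Rb_apply_b : Rb b = b := rfl

theorem Ra_apply_commutator : Ra ⁅b, a⁆ = ⁅b, a⁆ := by
  rw [map_commutatorElement, Ra_apply_a, Ra_apply_b, commutatorElement_def, commutatorElement_def]
  group

theorem Rb_apply_commutator : Rb ⁅b, a⁆ = ⁅b, a⁆ := by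
  rw [map_commutatorElement, Rb_apply_a, Rb_apply_b, commutatorElement_def, commutatorElement_def]
  group

theorem R_apply_commutator (w : F) : R w ⁅b, a⁆ = ⁅b, a⁆ :=
  FreeGroup.lift_apply_eq_self _ (Bool.rec Ra_apply_commutator Rb_apply_commutator) w

/-- For every `w`, `Pal(w) = (b a)⁻¹ · R_w(b a)`, i.e. `Pal(w) = a⁻¹ b⁻¹ R_w(b a)`. -/
theorem Pal_eq_ba (w : F) : Pal w = (b * a)⁻¹ * R w (b * a) :=
  (R w).inv_mul_apply_mul_swap_of_apply_commutator (R_apply_commutator w)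

end PalWord
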